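/- arXiv:1307.1764 — 2 statements merged into one kernel-verified Lean document; each statement's English description precedes it below -/
import Mathlib

section
/- If a function τ_a : States → ℝ is concave (superadditive over convex mixtures), τ₃ : States → ℝ is convex, and τ_a(ρ) ≥ τ₃(ρ) ≥ 0 for all ρ, then τ₄(ρ) := √(τ_a(ρ)² − τ₃(ρ)²) is concave: for λ ∈ [0,1], λτ₄(ρ₁) + (1−λ)τ₄(ρ₂) ≤ τ₄(λρ₁ + (1−λ)ρ₂). -/
/-!
On the cone `0 ≤ y ≤ x` the map `(x, y) ↦ √(x² - y²)` is positively homogeneous and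
superadditive (the reverse triangle inequality of the Minkowski plane), nondecreasing in `x` and
nonincreasing in `y`. Concavity of `τ_a` and convexity of `τ₃` move the mixture in exactly these
directions, so `τ₄ = √(τ_a² - τ₃²)` inherits concavity.
-/

namespace Real

lemma mul_sqrt_sq_sub_sq {c : ℝ} (hc : 0 ≤ c) (x y : ℝ) :
    c * √(x ^ 2 - y ^ 2) = √((c * x) ^ 2 - (c * y) ^ 2) := by
  rw [mul_pow, mul_pow, ← mul_sub, sqrt_mul (by positivity), sqrt_sq hc]

lemma sqrt_sq_sub_sq_mul_le {x₁ y₁ x₂ y₂ : ℝ} (hy₁ : 0 ≤ y₁) (hxy₁ : y₁ ≤ x₁)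
    (hy₂ : 0 ≤ y₂) (hxy₂ : y₂ ≤ x₂) :
    √(x₁ ^ 2 - y₁ ^ 2) * √(x₂ ^ 2 - y₂ ^ 2) ≤ x₁ * x₂ - y₁ * y₂ := by
  rw [← sqrt_mul (by nlinarith)]
  apply sqrt_le_iff.mpr
  constructor
  · nlinarith
  · nlinarith [sq_nonneg (x₁ * y₂ - x₂ * y₁)]

lemma sqrt_sq_sub_sq_add_le {x₁ y₁ x₂ y₂ : ℝ} (hy₁ : 0 ≤ y₁) (hxy₁ : y₁ ≤ x₁)
    (hy₂ : 0 ≤ y₂) (hxy₂ : y₂ ≤ x₂) :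
    √(x₁ ^ 2 - y₁ ^ 2) + √(x₂ ^ 2 - y₂ ^ 2) ≤ √((x₁ + x₂) ^ 2 - (y₁ + y₂) ^ 2) := by
  have h₁ : √(x₁ ^ 2 - y₁ ^ 2) ^ 2 = x₁ ^ 2 - y₁ ^ 2 := sq_sqrt (by nlinarith)
  have h₂ : √(x₂ ^ 2 - y₂ ^ 2) ^ 2 = x₂ ^ 2 - y₂ ^ 2 := sq_sqrt (by nlinarith)
  apply le_sqrt_of_sq_le
  nlinarith [sqrt_sq_sub_sq_mul_le hy₁ hxy₁ hy₂ hxy₂]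

lemma sqrt_sq_sub_sq_le_sqrt_sq_sub_sq {x y x' y' : ℝ} (hx : 0 ≤ x) (hxx' : x ≤ x')
    (hy' : 0 ≤ y') (hy'y : y' ≤ y) :
    √(x ^ 2 - y ^ 2) ≤ √(x' ^ 2 - y' ^ 2) := by
  gcongr

end Real

/-- If τ_a is concave, τ₃ is convex and τ_a ≥ τ₃ ≥ 0 pointwise, then
τ₄ := √(τ_a² − τ₃²) is concave over convex mixtures of states. -/
theorem tau4_concave {V : Type*} [AddCommGroup V] [Module ℝ V]
    (τa τ₃ : V → ℝ)
    (hconc : ∀ (ρ₁ ρ₂ : V) (lam : ℝ), 0 ≤ lam → lam ≤ 1 →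
      lam * τa ρ₁ + (1 - lam) * τa ρ₂ ≤ τa (lam • ρ₁ + (1 - lam) • ρ₂))
    (hconv : ∀ (ρ₁ ρ₂ : V) (lam : ℝ), 0 ≤ lam → lam ≤ 1 →
      τ₃ (lam • ρ₁ + (1 - lam) • ρ₂) ≤ lam * τ₃ ρ₁ + (1 - lam) * τ₃ ρ₂)
    (hge : ∀ ρ : V, τ₃ ρ ≤ τa ρ) (hpos : ∀ ρ : V, 0 ≤ τ₃ ρ) :
    ∀ (ρ₁ ρ₂ : V) (lam : ℝ), 0 ≤ lam → lam ≤ 1 →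
      lam * Real.sqrt (τa ρ₁ ^ 2 - τ₃ ρ₁ ^ 2)
        + (1 - lam) * Real.sqrt (τa ρ₂ ^ 2 - τ₃ ρ₂ ^ 2)
      ≤ Real.sqrt (τa (lam • ρ₁ + (1 - lam) • ρ₂) ^ 2
        - τ₃ (lam • ρ₁ + (1 - lam) • ρ₂) ^ 2) := by
  intro ρ₁ ρ₂ lam hl₀ hl₁
  have hl₁' : 0 ≤ 1 - lam := sub_nonneg.mpr hl₁
  have hy₁ := mul_nonneg hl₀ (hpos ρ₁)
  have hy₂ := mul_nonneg hl₁' (hpos ρ₂)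
  have hxy₁ := mul_le_mul_of_nonneg_left (hge ρ₁) hl₀
  have hxy₂ := mul_le_mul_of_nonneg_left (hge ρ₂) hl₁'
  rw [Real.mul_sqrt_sq_sub_sq hl₀, Real.mul_sqrt_sq_sub_sq hl₁']
  calc _ ≤ √((lam * τa ρ₁ + (1 - lam) * τa ρ₂) ^ 2 - (lam * τ₃ ρ₁ + (1 - lam) * τ₃ ρ₂) ^ 2) :=
        Real.sqrt_sq_sub_sq_add_le hy₁ hxy₁ hy₂ hxy₂
    _ ≤ _ := Real.sqrt_sq_sub_sq_le_sqrt_sq_sub_sq (by linarith) (hconc ρ₁ ρ₂ lam hl₀ hl₁)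
        (hpos _) (hconv ρ₁ ρ₂ lam hl₀ hl₁)
end

section
/- The Cayley hyperdeterminant polynomial D(a) = d₁ − 2d₂ + 4d₃ of a 2×2×2 tensor is invariant (up to sign of determinant squared being 1) under SL(2,ℂ) acting on any single index: if det A = 1 then D(A·a) = D(a). -/
/-- d₁ of the CKW 3-tangle. -/
def d₁ (a : Fin 2 → Fin 2 → Fin 2 → ℂ) : ℂ :=
  (a 0 0 0) ^ 2 * (a 1 1 1) ^ 2 + (a 0 0 1) ^ 2 * (a 1 1 0) ^ 2
    + (a 0 1 0) ^ 2 * (a 1 0 1) ^ 2 + (a 1 0 0) ^ 2 * (a 0 1 1) ^ 2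

/-- d₂ of the CKW 3-tangle. -/
def d₂ (a : Fin 2 → Fin 2 → Fin 2 → ℂ) : ℂ :=
  a 0 0 0 * a 1 1 1 * a 0 1 1 * a 1 0 0 + a 0 0 0 * a 1 1 1 * a 1 0 1 * a 0 1 0
    + a 0 0 0 * a 1 1 1 * a 1 1 0 * a 0 0 1 + a 0 1 1 * a 1 0 0 * a 1 0 1 * a 0 1 0
    + a 0 1 1 * a 1 0 0 * a 1 1 0 * a 0 0 1 + a 1 0 1 * a 0 1 0 * a 1 1 0 * a 0 0 1

/-- d₃ of the CKW 3-tangle. -/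
def d₃ (a : Fin 2 → Fin 2 → Fin 2 → ℂ) : ℂ :=
  a 0 0 0 * a 1 1 0 * a 1 0 1 * a 0 1 1 + a 1 1 1 * a 0 0 1 * a 0 1 0 * a 1 0 0


/-- Cayley's 2×2×2 hyperdeterminant D = d₁ − 2d₂ + 4d₃. -/
def hyperdet (a : Fin 2 → Fin 2 → Fin 2 → ℂ) : ℂ := d₁ a - 2 * d₂ a + 4 * d₃ a

/-- Action on the first index. -/
noncomputable def actFst (A : Matrix (Fin 2) (Fin 2) ℂ) (a : Fin 2 → Fin 2 → Fin 2 → ℂ) :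
    Fin 2 → Fin 2 → Fin 2 → ℂ := fun i j k => ∑ i', A i i' * a i' j k

/-- Action on the second index. -/
noncomputable def actSnd (A : Matrix (Fin 2) (Fin 2) ℂ) (a : Fin 2 → Fin 2 → Fin 2 → ℂ) :
    Fin 2 → Fin 2 → Fin 2 → ℂ := fun i j k => ∑ j', A j j' * a i j' k

/-- Action on the third index. -/
noncomputable def actTrd (A : Matrix (Fin 2) (Fin 2) ℂ) (a : Fin 2 → Fin 2 → Fin 2 → ℂ) :
    Fin 2 → Fin 2 → Fin 2 → ℂ := fun i j k => ∑ k', A k k' * a i j k'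

/-! `D` is a relative invariant of weight two: on the first index `D (A · a) = (det A)² D a` is a
polynomial identity in the entries of `A` and `a`, and since `D` is symmetric under permuting the
three indices, the same covariance holds on the other two. -/

section Hyperdet

variable (A : Matrix (Fin 2) (Fin 2) ℂ) (a : Fin 2 → Fin 2 → Fin 2 → ℂ)

theorem hyperdet_actFst : hyperdet (actFst A a) = A.det ^ 2 * hyperdet a := by
  simp only [hyperdet, d₁, d₂, d₃, actFst, Fin.sum_univ_two, Matrix.det_fin_two]
  ring

def swapFstSnd : Fin 2 → Fin 2 → Fin 2 → ℂ := fun i j k => a j i k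

def swapFstTrd : Fin 2 → Fin 2 → Fin 2 → ℂ := fun i j k => a k j i

theorem hyperdet_swapFstSnd : hyperdet (swapFstSnd a) = hyperdet a := by
  simp only [hyperdet, d₁, d₂, d₃, swapFstSnd]
  ring

theorem hyperdet_swapFstTrd : hyperdet (swapFstTrd a) = hyperdet a := by
  simp only [hyperdet, d₁, d₂, d₃, swapFstTrd]
  ring

theorem actSnd_eq_swapFstSnd_actFst :
    actSnd A a = swapFstSnd (actFst A (swapFstSnd a)) := rfl

theorem actTrd_eq_swapFstTrd_actFst :
    actTrd A a = swapFstTrd (actFst A (swapFstTrd a)) := rfl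

theorem hyperdet_actSnd : hyperdet (actSnd A a) = A.det ^ 2 * hyperdet a := by
  rw [actSnd_eq_swapFstSnd_actFst, hyperdet_swapFstSnd, hyperdet_actFst, hyperdet_swapFstSnd]

theorem hyperdet_actTrd : hyperdet (actTrd A a) = A.det ^ 2 * hyperdet a := by
  rw [actTrd_eq_swapFstTrd_actFst, hyperdet_swapFstTrd, hyperdet_actFst, hyperdet_swapFstTrd]

end Hyperdet

/-- The hyperdeterminant is invariant under SL(2,ℂ) acting on any single index. -/
theorem hyperdet_SL2_invariant (A : Matrix (Fin 2) (Fin 2) ℂ) (hA : A.det = 1)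
    (a : Fin 2 → Fin 2 → Fin 2 → ℂ) :
    hyperdet (actFst A a) = hyperdet a ∧
    hyperdet (actSnd A a) = hyperdet a ∧
    hyperdet (actTrd A a) = hyperdet a := by
  simp only [hyperdet_actFst, hyperdet_actSnd, hyperdet_actTrd, hA, one_pow, one_mul, and_self]
end
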